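/- arXiv:2003.13275 — 3 statements merged into one kernel-verified Lean document; each statement's English description precedes it below -/
import Mathlib

section
/- Let κ > 0, 0 ≤ b_l < b_u, x ≥ b_l + κ, and let V : [0,∞) → ℝ be differentiable with V′ ≥ 0 everywhere, V′(y) ≥ 1 for y ≤ b_l and V′(y) ≤ 1 for y ≥ b_l. Define P(l) = l − κ + V(x−l) − V(x) for l ∈ [κ, x]. Then P attains its maximum over [κ, x] at l* = max(κ, x − b_l); that is, P(l) ≤ P(l*) for all l ∈ [κ, x]. -/
open Set

/-- If `V` is differentiable nondecreasing with `V′ ≥ 1` below `b_l` and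
`V′ ≤ 1` above `b_l`, then `P(l) = l − κ + V(x−l) − V(x)` on `[κ,x]` (for `x ≥ b_l + κ`)
is maximized at `l* = max(κ, x − b_l)`. -/
theorem stmt12 (κ bl bu x : ℝ) (hκ : 0 < κ) (hbl : 0 ≤ bl) (hblu : bl < bu)
    (hx : bl + κ ≤ x)
    (V V' : ℝ → ℝ)
    (hdiff : ∀ y, 0 ≤ y → HasDerivAt V (V' y) y)
    (hVnn : ∀ y, 0 ≤ y → 0 ≤ V' y)
    (hbelow : ∀ y, 0 ≤ y → y ≤ bl → 1 ≤ V' y)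
    (habove : ∀ y, bl ≤ y → V' y ≤ 1) :
    ∀ l ∈ Set.Icc κ x,
      l - κ + V (x - l) - V x
        ≤ max κ (x - bl) - κ + V (x - max κ (x - bl)) - V x := by
  intro l hl
  obtain ⟨hl1, hl2⟩ := hl
  have hmax : max κ (x - bl) = x - bl := max_eq_right (by linarith)
  rw [hmax]
  have hxb : x - (x - bl) = bl := by ring
  rw [hxb]
  set g : ℝ → ℝ := fun y => V y - y with hg
  have hgd : ∀ y, 0 ≤ y → HasDerivAt g (V' y - 1) y := fun y hy =>
    (hdiff y hy).sub (hasDerivAt_id y)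
  -- key : g (x - l) ≤ g bl
  set t := x - l with ht
  have ht0 : 0 ≤ t := by simp [ht]; linarith
  have key : g t ≤ g bl := by
    rcases le_total t bl with hc | hc
    · -- g monotone on [0, bl]
      have hmono : MonotoneOn g (Icc 0 bl) := by
        apply monotoneOn_of_deriv_nonneg (convex_Icc 0 bl)
        · exact fun y hy => ((hgd y hy.1).continuousAt).continuousWithinAt
        · intro y hy
          rw [interior_Icc] at hy
          exact ((hgd y hy.1.le).differentiableAt).differentiableWithinAt
        · intro y hy
          rw [interior_Icc] at hy
          rw [(hgd y hy.1.le).deriv]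
          have := hbelow y hy.1.le hy.2.le
          linarith
      exact hmono ⟨ht0, hc⟩ ⟨hbl, le_refl bl⟩ hc
    · -- g antitone on [bl, t]
      have hanti : AntitoneOn g (Icc bl t) := by
        apply antitoneOn_of_deriv_nonpos (convex_Icc bl t)
        · exact fun y hy => ((hgd y (hbl.trans hy.1)).continuousAt).continuousWithinAt
        · intro y hy
          rw [interior_Icc] at hy
          exact ((hgd y (hbl.trans hy.1.le)).differentiableAt).differentiableWithinAt
        · intro y hy
          rw [interior_Icc] at hy
          rw [(hgd y (hbl.trans hy.1.le)).deriv]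
          have := habove y hy.1.le
          linarith
      exact hanti ⟨le_refl bl, hc⟩ ⟨hc, le_refl t⟩ hc
  have : V t - t ≤ V bl - bl := key
  have htl : V (x - l) = V t := by rw [ht]
  rw [htl]
  linarith
end

section
/- Let φ > 0 and let H, J : [b*, ∞) → ℝ be differentiable with J > 0, J′ > 0, satisfying H′(b) = J(b) − J′(b)/φ and φ·H(b)/J(b) + 1 > 0 for all b ≥ b*. Then the function b ↦ b − H(b)/J(b) is strictly increasing on [b*, ∞); in fact its derivative equals (J′(b)/J(b))·(1/φ + H(b)/J(b)) > 0. -/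
open Set

/-- If `H, J` are differentiable on `[b*,∞)` with `J > 0`, `J′ > 0`,
`H′ = J − J′/φ`, and `φH/J + 1 > 0` there, then `b ↦ b − H(b)/J(b)` is strictly
increasing on `[b*,∞)` with derivative `(J′(b)/J(b))·(1/φ + H(b)/J(b)) > 0`. -/
theorem stmt18 (φ bstar : ℝ) (hφ : 0 < φ) (H J H' J' : ℝ → ℝ)
    (hH : ∀ b ∈ Set.Ici bstar, HasDerivAt H (H' b) b)
    (hJ : ∀ b ∈ Set.Ici bstar, HasDerivAt J (J' b) b)
    (hJpos : ∀ b ∈ Set.Ici bstar, 0 < J b)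
    (hJ'pos : ∀ b ∈ Set.Ici bstar, 0 < J' b)
    (hrel : ∀ b ∈ Set.Ici bstar, H' b = J b - J' b / φ)
    (hpos : ∀ b ∈ Set.Ici bstar, 0 < φ * H b / J b + 1) :
    StrictMonoOn (fun b => b - H b / J b) (Set.Ici bstar) ∧
      ∀ b ∈ Set.Ici bstar,
        HasDerivAt (fun t => t - H t / J t) (J' b / J b * (1 / φ + H b / J b)) b ∧
          0 < J' b / J b * (1 / φ + H b / J b) := by
  have key : ∀ b ∈ Set.Ici bstar,
      HasDerivAt (fun t => t - H t / J t) (J' b / J b * (1 / φ + H b / J b)) b ∧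
        0 < J' b / J b * (1 / φ + H b / J b) := by
    intro b hb
    have hJb := (hJpos b hb).ne'
    have hd : HasDerivAt (fun t => t - H t / J t)
        (1 - (H' b * J b - H b * J' b) / (J b)^2) b :=
      (hasDerivAt_id b).sub ((hH b hb).div (hJ b hb) hJb)
    have heq : 1 - (H' b * J b - H b * J' b) / (J b)^2
        = J' b / J b * (1 / φ + H b / J b) := by
      rw [hrel b hb]
      field_simp
      ring
    rw [heq] at hd
    refine ⟨hd, ?_⟩
    have h1 : 0 < J' b / J b := div_pos (hJ'pos b hb) (hJpos b hb)
    have h2 : 0 < 1 / φ + H b / J b := by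
      have := hpos b hb
      have : 0 < (φ * H b / J b + 1) / φ := div_pos this hφ
      calc (0:ℝ) < (φ * H b / J b + 1) / φ := this
        _ = 1 / φ + H b / J b := by field_simp; ring
    exact mul_pos h1 h2
  refine ⟨?_, key⟩
  have hcont : ContinuousOn (fun b => b - H b / J b) (Set.Ici bstar) :=
    fun x hx => ((key x hx).1.continuousAt).continuousWithinAt
  apply StrictMonoOn.mono (strictMonoOn_of_deriv_pos (convex_Ici bstar) hcont ?_) le_rfl
  intro x hx
  rw [interior_Ici] at hx
  rw [(key x (Set.mem_Ici.mpr (le_of_lt (Set.mem_Ioi.mp hx)))).1.deriv]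
  exact (key x (Set.mem_Ici.mpr (le_of_lt (Set.mem_Ioi.mp hx)))).2
end

section
/- Let φ, γ, δ > 0, let H, J, Zr : [0,∞) → ℝ be differentiable with J > 0, satisfying H′ = J − J′/φ and J′ = (δφ/(γ+δ))·Zr, and suppose x ↦ Zr(x)/J(x) is strictly increasing and φ·H(b)/J(b) + 1 > 0. Then for every 0 < u < b, the derivative in b of the expression (H(b)/J(b))·J(b−u) − H(b−u) equals (δ/(γ+δ))·(φH(b)/J(b) + 1)·(Zr(b−u) − (Zr(b)/J(b))·J(b−u)), and this quantity is strictly negative. -/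
open Set

/-- Under the scale-function identities `H′ = J − J′/φ` and
`J′ = (δφ/(γ+δ))Zr`, with `J > 0`, `Zr/J` strictly increasing on `[0,∞)` and
`φH(b)/J(b) + 1 > 0`, for `0 < u < b` the derivative in `b` of
`(H(b)/J(b))·J(b−u) − H(b−u)` equals
`(δ/(γ+δ))·(φH(b)/J(b) + 1)·(Zr(b−u) − (Zr(b)/J(b))·J(b−u))`, which is
strictly negative. -/
theorem stmt19 (φ γ δ : ℝ) (hφ : 0 < φ) (hγ : 0 < γ) (hδ : 0 < δ)
    (H J Zr H' J' : ℝ → ℝ)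
    (hH : ∀ x, HasDerivAt H (H' x) x)
    (hJ : ∀ x, HasDerivAt J (J' x) x)
    (hJpos : ∀ x, 0 < J x)
    (hrel1 : ∀ x, H' x = J x - J' x / φ)
    (hrel2 : ∀ x, J' x = δ * φ / (γ + δ) * Zr x)
    (hmono : StrictMonoOn (fun x => Zr x / J x) (Set.Ici 0))
    (b u : ℝ) (hu : 0 < u) (hub : u < b)
    (hpos : 0 < φ * H b / J b + 1) :
    HasDerivAt (fun t => H t / J t * J (t - u) - H (t - u))
        (δ / (γ + δ) * (φ * H b / J b + 1) * (Zr (b - u) - Zr b / J b * J (b - u))) b ∧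
      δ / (γ + δ) * (φ * H b / J b + 1) * (Zr (b - u) - Zr b / J b * J (b - u)) < 0 := by
  have hγδ : γ + δ ≠ 0 := by positivity
  constructor
  · have h1 : HasDerivAt (fun t => H t / J t)
        ((H' b * J b - H b * J' b) / (J b) ^ 2) b := (hH b).div (hJ b) (hJpos b).ne'
    have h2 : HasDerivAt (fun t => J (t - u)) (J' (b - u)) b := by
      exact HasDerivAt.comp_sub_const b u (hJ (b - u))
    have h3 : HasDerivAt (fun t => H (t - u)) (H' (b - u)) b := by
      exact HasDerivAt.comp_sub_const b u (hH (b - u))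
    have hd : HasDerivAt (fun t => H t / J t * J (t - u) - H (t - u))
        ((H' b * J b - H b * J' b) / J b ^ 2 * J (b - u) + H b / J b * J' (b - u) - H' (b - u)) b :=
      (h1.mul h2).sub h3
    convert hd using 1
    rw [hrel1 b, hrel1 (b - u), hrel2 b, hrel2 (b - u)]
    field_simp [hγδ, (hJpos b).ne', hφ.ne']
    ring
  · have hm : Zr (b - u) / J (b - u) < Zr b / J b :=
      hmono (by simp; linarith) (by simp; linarith) (by linarith)
    have hlt : Zr (b - u) < Zr b / J b * J (b - u) := by
      rw [div_mul_eq_mul_div, lt_div_iff₀ (hJpos b)]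
      have := (div_lt_div_iff₀ (hJpos (b - u)) (hJpos b)).mp hm
      linarith
    have hc : 0 < δ / (γ + δ) := by positivity
    exact mul_neg_of_pos_of_neg (mul_pos hc hpos) (by linarith)
end
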